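/- arXiv:2504.19100 — 6 statements merged into one kernel-verified Lean document; each statement's English description precedes it below -/
import Mathlib

section
/- Let T be a linear functional on the real vector space of test functions on ℝⁿ. Then G(T) = sup{T(φ) : φ a test function with |∇φ(x)| ≤ 1 for all x ∈ ℝⁿ}, as an equality in [0,∞]. (Theorem 3.2(A): the norm G defined by filling with one-dimensional functionals of finite mass coincides with the dual Lipschitz expression.) -/
open scoped ENNReal
open Set
open scoped Pointwise

noncomputable section

/-- A test function on ℝⁿ: a `C^∞` function with compact support. -/
def IsTest (n : ℕ) (φ : EuclideanSpace ℝ (Fin n) → ℝ) : Prop :=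
  ContDiff ℝ (⊤ : ℕ∞) φ ∧ HasCompactSupport φ

/-- A `C^∞` compactly supported vector field on ℝⁿ. -/
def IsTestVF (n : ℕ) (X : EuclideanSpace ℝ (Fin n) → EuclideanSpace ℝ (Fin n)) : Prop :=
  ContDiff ℝ (⊤ : ℕ∞) X ∧ HasCompactSupport X

/-- `T` is a linear functional on the vector space of test functions. -/
def IsLinOnTest (n : ℕ) (T : (EuclideanSpace ℝ (Fin n) → ℝ) → ℝ) : Prop :=
  (∀ φ ψ, IsTest n φ → IsTest n ψ → T (φ + ψ) = T φ + T ψ) ∧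
  (∀ (c : ℝ) φ, IsTest n φ → T (c • φ) = c * T φ)

/-- `S` is a linear functional on the vector space of smooth compactly supported
vector fields. -/
def IsLinOnTestVF (n : ℕ)
    (S : (EuclideanSpace ℝ (Fin n) → EuclideanSpace ℝ (Fin n)) → ℝ) : Prop :=
  (∀ X Y, IsTestVF n X → IsTestVF n Y → S (X + Y) = S X + S Y) ∧
  (∀ (c : ℝ) X, IsTestVF n X → S (c • X) = c * S X)

/-- Mass of a functional on test functions:
`M(T) = sup { T(φ) : φ test, |φ(x)| ≤ 1 for all x } ∈ [0,∞]`. -/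
def Mass0 (n : ℕ) (T : (EuclideanSpace ℝ (Fin n) → ℝ) → ℝ) : ℝ≥0∞ :=
  ⨆ φ : {φ : EuclideanSpace ℝ (Fin n) → ℝ // IsTest n φ ∧ ∀ x, |φ x| ≤ 1},
    ENNReal.ofReal (T ↑φ)

/-- Mass of a functional on smooth compactly supported vector fields:
`M(S) = sup { S(X) : X test vector field, |X(x)| ≤ 1 for all x } ∈ [0,∞]`. -/
def Mass1 (n : ℕ)
    (S : (EuclideanSpace ℝ (Fin n) → EuclideanSpace ℝ (Fin n)) → ℝ) : ℝ≥0∞ :=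
  ⨆ X : {X : EuclideanSpace ℝ (Fin n) → EuclideanSpace ℝ (Fin n) //
      IsTestVF n X ∧ ∀ x, ‖X x‖ ≤ 1},
    ENNReal.ofReal (S ↑X)

/-- `G(T) = inf { M(S) : S linear on test vector fields, M(S) < ∞, T(φ) = S(∇φ) }`. -/
def GNorm (n : ℕ) (T : (EuclideanSpace ℝ (Fin n) → ℝ) → ℝ) : ℝ≥0∞ :=
  sInf {m : ℝ≥0∞ | ∃ S : (EuclideanSpace ℝ (Fin n) → EuclideanSpace ℝ (Fin n)) → ℝ,
    IsLinOnTestVF n S ∧ Mass1 n S < ⊤ ∧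
    (∀ φ, IsTest n φ → T φ = S (fun x => gradient φ x)) ∧ m = Mass1 n S}

lemma isTest_zero (n : ℕ) : IsTest n 0 :=
  ⟨contDiff_const, by
    show IsCompact (tsupport (0 : EuclideanSpace ℝ (Fin n) → ℝ))
    rw [tsupport, Function.support_zero]
    simpa using isCompact_empty⟩

lemma isTest_add {n : ℕ} {φ ψ : EuclideanSpace ℝ (Fin n) → ℝ} (hφ : IsTest n φ)
    (hψ : IsTest n ψ) : IsTest n (φ + ψ) := ⟨hφ.1.add hψ.1, hφ.2.add hψ.2⟩

lemma isTest_smul {n : ℕ} (c : ℝ) {φ : EuclideanSpace ℝ (Fin n) → ℝ} (hφ : IsTest n φ) :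
    IsTest n (c • φ) := ⟨hφ.1.const_smul c, hφ.2.comp_left (g := fun y => c • y) (smul_zero c)⟩

lemma grad_add {n : ℕ} {φ ψ : EuclideanSpace ℝ (Fin n) → ℝ}
    (hφ : Differentiable ℝ φ) (hψ : Differentiable ℝ ψ) (x : EuclideanSpace ℝ (Fin n)) :
    gradient (φ + ψ) x = gradient φ x + gradient ψ x := by
  unfold gradient
  rw [show fderiv ℝ (φ + ψ) x = fderiv ℝ φ x + fderiv ℝ ψ x from fderiv_add (hφ x) (hψ x),
    map_add]

lemma grad_smul {n : ℕ} (c : ℝ) {φ : EuclideanSpace ℝ (Fin n) → ℝ}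
    (hφ : Differentiable ℝ φ) (x : EuclideanSpace ℝ (Fin n)) :
    gradient (c • φ) x = c • gradient φ x := by
  unfold gradient
  rw [show fderiv ℝ (c • φ) x = c • fderiv ℝ φ x from fderiv_const_smul (hφ x) c, map_smul]

lemma grad_zero {n : ℕ} (x : EuclideanSpace ℝ (Fin n)) :
    gradient (0 : EuclideanSpace ℝ (Fin n) → ℝ) x = 0 := by
  have : gradient (fun _ : EuclideanSpace ℝ (Fin n) => (0:ℝ)) x = 0 := gradient_const x 0
  exact this

lemma isTestVF_grad {n : ℕ} {φ : EuclideanSpace ℝ (Fin n) → ℝ} (hφ : IsTest n φ) :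
    IsTestVF n (fun x => gradient φ x) := by
  constructor
  · have h1 : ContDiff ℝ (⊤ : ℕ∞) (fderiv ℝ φ) := hφ.1.fderiv_right (by simp)
    exact ((InnerProductSpace.toDual ℝ (EuclideanSpace ℝ (Fin n))).symm.toContinuousLinearEquiv.contDiff).comp h1
  · exact (hφ.2.fderiv ℝ).comp_left (map_zero _)

lemma nontrivial_euc {n : ℕ} (hn : 0 < n) : Nontrivial (EuclideanSpace ℝ (Fin n)) :=
  ⟨⟨EuclideanSpace.single ⟨0, hn⟩ 1, 0, fun hcontra => by
    simpa [EuclideanSpace.single_apply] using congrArg (fun v : EuclideanSpace ℝ (Fin n) => v ⟨0, hn⟩) hcontra⟩⟩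

lemma test_eq_of_grad_eq {n : ℕ} (hn : 0 < n) {φ ψ : EuclideanSpace ℝ (Fin n) → ℝ}
    (hφ : IsTest n φ) (hψ : IsTest n ψ) (h : ∀ x, gradient φ x = gradient ψ x) : φ = ψ := by
  have hfd : ∀ x, fderiv ℝ φ x = fderiv ℝ ψ x := by
    intro x
    have := congrArg (InnerProductSpace.toDual ℝ (EuclideanSpace ℝ (Fin n))) (h x)
    simpa [gradient] using this
  have hdφ := hφ.1.differentiable (by simp)
  have hdψ := hψ.1.differentiable (by simp)
  have hfder : ∀ x, fderiv ℝ (φ - ψ) x = 0 := by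
    intro x
    rw [show fderiv ℝ (φ - ψ) x = fderiv ℝ φ x - fderiv ℝ ψ x from fderiv_sub (hdφ x) (hdψ x),
      hfd x, sub_self]
  have hconst : ∀ x y, (φ - ψ) x = (φ - ψ) y := is_const_of_fderiv_eq_zero (hdφ.sub hdψ) hfder
  have hsupp : HasCompactSupport (φ - ψ) := by
    rw [sub_eq_add_neg]
    exact hφ.2.add (hψ.2.comp_left (g := Neg.neg) neg_zero)
  haveI := nontrivial_euc hn
  obtain ⟨x₀, hx₀⟩ : ∃ x₀, x₀ ∉ tsupport (φ - ψ) := by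
    by_contra hcon; push_neg at hcon
    exact hsupp.ne_univ (Set.eq_univ_of_forall hcon)
  have hz : ∀ x, (φ - ψ) x = 0 := fun x =>
    (hconst x x₀).trans (image_eq_zero_of_notMem_tsupport hx₀)
  funext x
  have := hz x
  rw [Pi.sub_apply, sub_eq_zero] at this
  exact this

def testVFSub (n : ℕ) : Submodule ℝ (EuclideanSpace ℝ (Fin n) → EuclideanSpace ℝ (Fin n)) where
  carrier := {X | IsTestVF n X}
  zero_mem' := ⟨contDiff_const, by
    show IsCompact (tsupport (0 : EuclideanSpace ℝ (Fin n) → EuclideanSpace ℝ (Fin n)))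
    rw [tsupport, Function.support_zero]
    simpa using isCompact_empty⟩
  add_mem' := fun hX hY => ⟨hX.1.add hY.1, hX.2.add hY.2⟩
  smul_mem' := fun c X hX => ⟨hX.1.const_smul c, hX.2.comp_left (g := fun y => c • y) (smul_zero c)⟩

def gradDom (n : ℕ) : Submodule ℝ ↥(testVFSub n) where
  carrier := {X | ∃ φ, IsTest n φ ∧ ∀ x, gradient φ x = (X : _ → _) x}
  zero_mem' := ⟨0, isTest_zero n, fun x => by simp [grad_zero]⟩
  add_mem' := by
    rintro X Y ⟨φ, hφ, hφX⟩ ⟨ψ, hψ, hψY⟩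
    exact ⟨φ + ψ, isTest_add hφ hψ, fun x => by
      rw [grad_add (hφ.1.differentiable (by simp)) (hψ.1.differentiable (by simp)), hφX, hψY]
      simp⟩
  smul_mem' := by
    rintro c X ⟨φ, hφ, hφX⟩
    exact ⟨c • φ, isTest_smul c hφ, fun x => by
      rw [grad_smul c (hφ.1.differentiable (by simp)), hφX]
      simp⟩

lemma key (n : ℕ) (hn : 0 < n) (T : (EuclideanSpace ℝ (Fin n) → ℝ) → ℝ)
    (hT : IsLinOnTest n T) (c : ℝ) (hc : 0 ≤ c)
    (hb : ∀ φ, IsTest n φ → (∀ x, ‖gradient φ x‖ ≤ 1) → T φ ≤ c) :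
    ∃ S : (EuclideanSpace ℝ (Fin n) → EuclideanSpace ℝ (Fin n)) → ℝ,
      IsLinOnTestVF n S ∧ Mass1 n S ≤ ENNReal.ofReal c ∧
      ∀ φ, IsTest n φ → T φ = S (fun x => gradient φ x) := by
  classical
  -- basic facts
  have T0 : T 0 = 0 := by
    have := hT.2 0 0 (isTest_zero n)
    simpa using this
  have hmem : ∀ X : ↥(gradDom n), ∃ φ, IsTest n φ ∧
      ∀ x, gradient φ x = ((X : ↥(testVFSub n)) : _ → _) x := fun X => X.2
  let pick : ↥(gradDom n) → (EuclideanSpace ℝ (Fin n) → ℝ) :=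
    fun X => Classical.choose (hmem X)
  have pick_test : ∀ X, IsTest n (pick X) := fun X => (Classical.choose_spec (hmem X)).1
  have pick_grad : ∀ (X : ↥(gradDom n)) x, gradient (pick X) x = ((↑X : ↥(testVFSub n)) : _ → _) x :=
    fun X => (Classical.choose_spec (hmem X)).2
  -- sup norm
  have bdd : ∀ X : ↥(testVFSub n), BddAbove (Set.range fun x =>
      ‖(X : EuclideanSpace ℝ (Fin n) → EuclideanSpace ℝ (Fin n)) x‖) := by
    intro X
    obtain ⟨C, hC⟩ := X.2.1.continuous.bounded_above_of_compact_support X.2.2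
    exact ⟨C, by rintro r ⟨x, rfl⟩; exact hC x⟩
  set sup : ↥(testVFSub n) → ℝ := fun X => sSup (Set.range fun x =>
    ‖(X : EuclideanSpace ℝ (Fin n) → EuclideanSpace ℝ (Fin n)) x‖) with hsup
  have sup_ge : ∀ (X : ↥(testVFSub n)) x,
      ‖(X : EuclideanSpace ℝ (Fin n) → EuclideanSpace ℝ (Fin n)) x‖ ≤ sup X :=
    fun X x => le_csSup (bdd X) ⟨x, rfl⟩
  have sup_nonneg : ∀ X, 0 ≤ sup X := fun X =>
    le_trans (norm_nonneg _) (sup_ge X (Classical.arbitrary _))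
  let N : ↥(testVFSub n) → ℝ := fun X => c * sup X
  have N_hom : ∀ a : ℝ, 0 < a → ∀ X, N (a • X) = a * N X := by
    intro a ha X
    have h1 : (Set.range fun x =>
          ‖((a • X : ↥(testVFSub n)) : EuclideanSpace ℝ (Fin n) → EuclideanSpace ℝ (Fin n)) x‖)
        = a • (Set.range fun x =>
          ‖(X : EuclideanSpace ℝ (Fin n) → EuclideanSpace ℝ (Fin n)) x‖) := by
      rw [← Set.range_smul]
      funext x
      simp [norm_smul, abs_of_pos ha, smul_eq_mul]
    have : sup (a • X) = a * sup X := by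
      rw [hsup]
      simp only []
      rw [h1, Real.sSup_smul_of_nonneg ha.le, smul_eq_mul]
    simp only [N, this]; ring
  have N_add : ∀ X Y, N (X + Y) ≤ N X + N Y := by
    intro X Y
    have h1 : sup (X + Y) ≤ sup X + sup Y := by
      apply csSup_le (Set.range_nonempty _)
      rintro r ⟨x, rfl⟩
      calc ‖((X + Y : ↥(testVFSub n)) : EuclideanSpace ℝ (Fin n) → EuclideanSpace ℝ (Fin n)) x‖
            = ‖(X : EuclideanSpace ℝ (Fin n) → EuclideanSpace ℝ (Fin n)) x
              + (Y : EuclideanSpace ℝ (Fin n) → EuclideanSpace ℝ (Fin n)) x‖ := by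
            simp
        _ ≤ ‖(X : EuclideanSpace ℝ (Fin n) → EuclideanSpace ℝ (Fin n)) x‖
            + ‖(Y : EuclideanSpace ℝ (Fin n) → EuclideanSpace ℝ (Fin n)) x‖ := norm_add_le _ _
        _ ≤ sup X + sup Y := add_le_add (sup_ge X x) (sup_ge Y x)
    calc N (X + Y) = c * sup (X + Y) := rfl
      _ ≤ c * (sup X + sup Y) := mul_le_mul_of_nonneg_left h1 hc
      _ = N X + N Y := by ring
  -- the partial linear functional and its extension
  have uniq : ∀ φ ψ, IsTest n φ → IsTest n ψ → (∀ x, gradient φ x = gradient ψ x) → φ = ψ :=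
    fun φ ψ hφ hψ h => test_eq_of_grad_eq hn hφ hψ h
  have f0_add : ∀ X Y : ↥(gradDom n), T (pick (X + Y)) = T (pick X) + T (pick Y) := by
    intro X Y
    have hpe : pick (X + Y) = pick X + pick Y := by
      apply uniq _ _ (pick_test _) (isTest_add (pick_test X) (pick_test Y))
      intro x
      rw [pick_grad, grad_add ((pick_test X).1.differentiable (by simp))
        ((pick_test Y).1.differentiable (by simp)), pick_grad, pick_grad]
      simp
    rw [hpe, hT.1 _ _ (pick_test X) (pick_test Y)]
  have f0_smul : ∀ (a : ℝ) (X : ↥(gradDom n)), T (pick (a • X)) = a * T (pick X) := by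
    intro a X
    have hpe : pick (a • X) = a • pick X := by
      apply uniq _ _ (pick_test _) (isTest_smul a (pick_test X))
      intro x
      rw [pick_grad, grad_smul a ((pick_test X).1.differentiable (by simp)), pick_grad]
      simp
    rw [hpe, hT.2 a _ (pick_test X)]
  let fl : ↥(gradDom n) →ₗ[ℝ] ℝ :=
    { toFun := fun X => T (pick X)
      map_add' := f0_add
      map_smul' := f0_smul }
  have hf : ∀ X : ↥(gradDom n), fl X ≤ N ↑X := by
    intro X
    have hφ := pick_test X
    have hga : ∀ x, ‖gradient (pick X) x‖ ≤ sup ↑X := fun x => by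
      rw [pick_grad]; exact sup_ge _ x
    rcases eq_or_lt_of_le (sup_nonneg (↑X : ↥(testVFSub n))) with h0 | hpos
    · have hg0 : ∀ x, gradient (pick X) x
          = gradient (0 : EuclideanSpace ℝ (Fin n) → ℝ) x := by
        intro x
        rw [grad_zero]
        have h1 := hga x
        rw [← h0] at h1
        exact norm_le_zero_iff.1 h1
      have hp0 : pick X = 0 := uniq _ _ hφ (isTest_zero n) hg0
      show T (pick X) ≤ c * sup ↑X
      rw [hp0, T0, ← h0, mul_zero]
    · have ht : T ((sup ↑X)⁻¹ • pick X) ≤ c := by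
        apply hb _ (isTest_smul _ hφ)
        intro x
        rw [grad_smul _ (hφ.1.differentiable (by simp)), norm_smul, Real.norm_eq_abs,
          abs_of_pos (inv_pos.2 hpos)]
        calc (sup ↑X)⁻¹ * ‖gradient (pick X) x‖
            ≤ (sup ↑X)⁻¹ * sup ↑X := mul_le_mul_of_nonneg_left (hga x) (inv_pos.2 hpos).le
          _ = 1 := inv_mul_cancel₀ hpos.ne'
      rw [hT.2 _ _ hφ] at ht
      show T (pick X) ≤ c * sup ↑X
      have heq : T (pick X) = sup ↑X * ((sup ↑X)⁻¹ * T (pick X)) := by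
        field_simp
      rw [heq]
      calc sup ↑X * ((sup ↑X)⁻¹ * T (pick X)) ≤ sup ↑X * c :=
            mul_le_mul_of_nonneg_left ht hpos.le
        _ = c * sup ↑X := mul_comm _ _
  obtain ⟨g, hg_eq, hg_le⟩ := exists_extension_of_le_sublinear ⟨gradDom n, fl⟩ N N_hom N_add hf
  let S : (EuclideanSpace ℝ (Fin n) → EuclideanSpace ℝ (Fin n)) → ℝ :=
    fun X => if h : IsTestVF n X then g ⟨X, h⟩ else 0
  refine ⟨S, ⟨?_, ?_⟩, ?_, ?_⟩
  · intro X Y hX hY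
    have hXY : IsTestVF n (X + Y) := ⟨hX.1.add hY.1, hX.2.add hY.2⟩
    simp only [S, dif_pos hXY, dif_pos hX, dif_pos hY]
    rw [show (⟨X + Y, hXY⟩ : ↥(testVFSub n)) = ⟨X, hX⟩ + ⟨Y, hY⟩ from rfl, map_add]
  · intro a X hX
    have haX : IsTestVF n (a • X) :=
      ⟨hX.1.const_smul a, hX.2.comp_left (g := fun y => a • y) (smul_zero a)⟩
    simp only [S, dif_pos haX, dif_pos hX]
    rw [show (⟨a • X, haX⟩ : ↥(testVFSub n)) = a • (⟨X, hX⟩ : ↥(testVFSub n)) from rfl,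
      map_smul, smul_eq_mul]
  · rw [Mass1]
    apply iSup_le
    rintro ⟨X, hX, hX1⟩
    apply ENNReal.ofReal_le_ofReal
    simp only [S, dif_pos hX]
    have hsle : sup ⟨X, hX⟩ ≤ 1 := by
      apply csSup_le (Set.range_nonempty _)
      rintro r ⟨x, rfl⟩
      exact hX1 x
    calc g ⟨X, hX⟩ ≤ N ⟨X, hX⟩ := hg_le _
      _ = c * sup ⟨X, hX⟩ := rfl
      _ ≤ c * 1 := mul_le_mul_of_nonneg_left hsle hc
      _ = c := mul_one c
  · intro φ hφ
    have hX : IsTestVF n (fun x => gradient φ x) := isTestVF_grad hφ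
    have hmemD : (⟨(fun x => gradient φ x), hX⟩ : ↥(testVFSub n)) ∈ gradDom n :=
      ⟨φ, hφ, fun x => rfl⟩
    simp only [S, dif_pos hX]
    have h2 : g ⟨(fun x => gradient φ x), hX⟩
        = T (pick ⟨⟨(fun x => gradient φ x), hX⟩, hmemD⟩) :=
      hg_eq ⟨⟨(fun x => gradient φ x), hX⟩, hmemD⟩
    rw [h2]
    have hpe : φ = pick ⟨⟨(fun x => gradient φ x), hX⟩, hmemD⟩ := by
      apply uniq _ _ hφ (pick_test _)
      intro x
      exact (pick_grad ⟨⟨(fun x => gradient φ x), hX⟩, hmemD⟩ x).symm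
    rw [← hpe]

/-- Theorem 3.2(A): `G(T) = sup { T(φ) : φ test, |∇φ(x)| ≤ 1 for all x }`
as an equality in `[0,∞]`. -/
theorem stmt0 (n : ℕ) (hn : 0 < n)
    (T : (EuclideanSpace ℝ (Fin n) → ℝ) → ℝ) (hT : IsLinOnTest n T) :
    GNorm n T =
      ⨆ φ : {φ : EuclideanSpace ℝ (Fin n) → ℝ //
          IsTest n φ ∧ ∀ x, ‖gradient φ x‖ ≤ 1},
        ENNReal.ofReal (T ↑φ) := by
  apply le_antisymm
  · -- GNorm ≤ sup
    set R := ⨆ φ : {φ : EuclideanSpace ℝ (Fin n) → ℝ //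
        IsTest n φ ∧ ∀ x, ‖gradient φ x‖ ≤ 1}, ENNReal.ofReal (T ↑φ) with hR
    rcases eq_top_or_lt_top R with htop | hlt
    · rw [htop]; exact le_top
    · have hb : ∀ φ, IsTest n φ → (∀ x, ‖gradient φ x‖ ≤ 1) → T φ ≤ R.toReal := by
        intro φ hφ h1
        have hle : ENNReal.ofReal (T φ) ≤ R :=
          le_iSup (fun ψ : {φ : EuclideanSpace ℝ (Fin n) → ℝ //
            IsTest n φ ∧ ∀ x, ‖gradient φ x‖ ≤ 1} => ENNReal.ofReal (T ↑ψ)) ⟨φ, hφ, h1⟩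
        rcases le_or_gt (T φ) 0 with h | h
        · exact h.trans ENNReal.toReal_nonneg
        · exact (ENNReal.ofReal_le_iff_le_toReal hlt.ne).1 hle
      obtain ⟨S, hS, hM, hTS⟩ := key n hn T hT R.toReal ENNReal.toReal_nonneg hb
      have hMfin : Mass1 n S < ⊤ := lt_of_le_of_lt hM ENNReal.ofReal_lt_top
      calc GNorm n T ≤ Mass1 n S := sInf_le ⟨S, hS, hMfin, hTS, rfl⟩
        _ ≤ ENNReal.ofReal R.toReal := hM
        _ = R := ENNReal.ofReal_toReal hlt.ne
  · -- sup ≤ GNorm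
    apply le_sInf
    rintro m ⟨S, hSlin, hSfin, hTS, rfl⟩
    apply iSup_le
    rintro ⟨φ, hφ, h1⟩
    rw [hTS φ hφ]
    exact le_iSup (fun X : {X : EuclideanSpace ℝ (Fin n) → EuclideanSpace ℝ (Fin n) //
      IsTestVF n X ∧ ∀ x, ‖X x‖ ≤ 1} => ENNReal.ofReal (S ↑X))
      ⟨fun x => gradient φ x, isTestVF_grad hφ, h1⟩
end
end

section
/- Comparison of mass and dual Lipschitz norm on grid points (Theorem 9.2): There exists a constant c(n) ≥ 1, depending only on n, such that for every positive integer k and every function θ : Σ_k → ℝ with Σ_{x∈Σ_k} θ(x) = 0 one has G(θ)/√n ≤ M(θ) ≤ c(n) · k^{2n} · G(θ). -/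
noncomputable section

/-- The grid `Σ_k = [-1,1]ⁿ ∩ (1/k)·ℤⁿ` of the cube of mesh `1/k`. -/
def grid (n k : ℕ) : Set (EuclideanSpace ℝ (Fin n)) :=
  {x | (∀ i, |x i| ≤ 1) ∧ ∀ i, ∃ m : ℤ, x i = m / k}

/-- Mass of a finitely supported function `θ : ℝⁿ → ℝ`, identified with the atomic
signed measure `Σ_x θ(x)·δ_x`: `M(θ) = Σ_x |θ(x)|`. -/
def massF (n : ℕ) (θ : EuclideanSpace ℝ (Fin n) →₀ ℝ) : ℝ :=
  ∑ x ∈ θ.support, |θ x|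

/-- Dual Lipschitz norm of a finitely supported function `θ : ℝⁿ → ℝ`:
`G(θ) = sup { Σ_x θ(x)·φ(x) : φ 1-Lipschitz }`. -/
def GF (n : ℕ) (θ : EuclideanSpace ℝ (Fin n) →₀ ℝ) : ℝ :=
  sSup {r : ℝ | ∃ φ : EuclideanSpace ℝ (Fin n) → ℝ,
    LipschitzWith 1 φ ∧ r = ∑ x ∈ θ.support, θ x * φ x}

/-!
For a `1`-Lipschitz `φ` and `Σ θ = 0`, `Σ θ(x) φ(x) = Σ θ(x) (φ(x) - φ(0))` and every point of the
grid has norm at most `√n`, which gives `G ≤ √n · M`. Conversely, distinct grid points are at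
distance at least `1/k`, so the tent function `φ = (1/(2k) - dist(·, {θ > 0}))⁺` is `1`-Lipschitz,
equals `1/(2k)` where `θ > 0` and vanishes where `θ < 0`; testing `G` against it gives
`M ≤ 4k · G`.
-/

open Metric

lemma Finsupp.sum_abs_eq_two_mul_sum_posPart {α : Type*} {θ : α →₀ ℝ}
    (hθ : ∑ x ∈ θ.support, θ x = 0) :
    ∑ x ∈ θ.support, |θ x| = 2 * ∑ x ∈ θ.support, (θ x)⁺ := by
  have h := Finset.sum_congr rfl fun x (_ : x ∈ θ.support) => abs_add_eq_two_nsmul_posPart (θ x)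
  rw [Finset.sum_add_distrib, hθ, ← Finset.smul_sum, nsmul_eq_mul] at h
  simpa using h

section PseudoMetricSpace

variable {α : Type*} [PseudoMetricSpace α] {θ : α →₀ ℝ}

lemma Finsupp.sum_mul_le_mul_sum_abs_of_lipschitzWith (hθ : ∑ x ∈ θ.support, θ x = 0)
    {φ : α → ℝ} (hφ : LipschitzWith 1 φ) {a : α} {R : ℝ}
    (hR : ∀ x ∈ θ.support, dist x a ≤ R) :
    ∑ x ∈ θ.support, θ x * φ x ≤ R * ∑ x ∈ θ.support, |θ x| := by
  have hshift : ∑ x ∈ θ.support, θ x * φ x = ∑ x ∈ θ.support, θ x * (φ x - φ a) := by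
    simp only [mul_sub, Finset.sum_sub_distrib, ← Finset.sum_mul, hθ, zero_mul, sub_zero]
  rw [hshift, Finset.mul_sum]
  refine Finset.sum_le_sum fun x hx => ?_
  have hφx : |φ x - φ a| ≤ R := by
    simpa [← Real.dist_eq] using (hφ.dist_le_mul x a).trans (by simpa using hR x hx)
  calc θ x * (φ x - φ a) ≤ |θ x| * |φ x - φ a| := by rw [← abs_mul]; exact le_abs_self _
    _ ≤ |θ x| * R := mul_le_mul_of_nonneg_left hφx (abs_nonneg _)
    _ = R * |θ x| := mul_comm _ _

lemma Finsupp.exists_lipschitzWith_one_sum_mul_eq {δ : ℝ} (hδ : 0 ≤ δ)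
    (hsep : ∀ x ∈ θ.support, ∀ y ∈ θ.support, x ≠ y → δ ≤ dist x y) :
    ∃ φ : α → ℝ, LipschitzWith 1 φ ∧
      ∑ x ∈ θ.support, θ x * φ x = δ / 2 * ∑ x ∈ θ.support, (θ x)⁺ := by
  set P : Set α := {x | x ∈ θ.support ∧ 0 < θ x}
  -- `infDist · ∅ = 0`, so the tent function below is only usable when `P` is nonempty.
  rcases P.eq_empty_or_nonempty with hP | hP
  · refine ⟨0, LipschitzWith.const' 0, ?_⟩
    have hnonpos : ∀ x ∈ θ.support, θ x ≤ 0 := fun x hx =>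
      not_lt.mp fun h => hP.subset ⟨hx, h⟩
    simp [Finset.sum_eq_zero fun x hx => posPart_eq_zero.mpr (hnonpos x hx)]
  refine ⟨fun y => max 0 (δ / 2 - infDist y P), ?_, ?_⟩
  · simpa using ((LipschitzWith.const (δ / 2)).sub (lipschitz_infDist_pt P)).const_max 0
  rw [Finset.mul_sum]
  refine Finset.sum_congr rfl fun x hx => ?_
  dsimp only
  rcases lt_or_gt_of_ne (Finsupp.mem_support_iff.mp hx) with hneg | hpos
  · have hfar : δ ≤ infDist x P :=
      (le_infDist hP).mpr fun p hp => hsep x hx p hp.1 fun h => (h ▸ hneg).not_gt hp.2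
    rw [max_eq_left (by linarith), posPart_eq_zero.mpr hneg.le]
    ring
  · rw [infDist_zero_of_mem (show x ∈ P from ⟨hx, hpos⟩), posPart_eq_self.mpr hpos.le,
      max_eq_right (by linarith)]
    ring

end PseudoMetricSpace

section DualLipschitzNorm

variable {n : ℕ} {θ : EuclideanSpace ℝ (Fin n) →₀ ℝ}

lemma GF_le_mul_massF (hθ : ∑ x ∈ θ.support, θ x = 0) {R : ℝ}
    (hR : ∀ x ∈ θ.support, ‖x‖ ≤ R) : GF n θ ≤ R * massF n θ :=
  csSup_le ⟨0, 0, LipschitzWith.const' 0, by simp⟩ fun _ ⟨_, hφ, hr⟩ =>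
    hr ▸ Finsupp.sum_mul_le_mul_sum_abs_of_lipschitzWith hθ hφ (a := 0) (by simpa using hR)

lemma sum_mul_le_GF (hθ : ∑ x ∈ θ.support, θ x = 0) {φ : EuclideanSpace ℝ (Fin n) → ℝ}
    (hφ : LipschitzWith 1 φ) : ∑ x ∈ θ.support, θ x * φ x ≤ GF n θ := by
  refine le_csSup ⟨(∑ x ∈ θ.support, ‖x‖) * massF n θ, fun _ ⟨_, hψ, hr⟩ => hr ▸ ?_⟩ ⟨φ, hφ, rfl⟩
  exact Finsupp.sum_mul_le_mul_sum_abs_of_lipschitzWith hθ hψ (a := 0) fun x hx => by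
    simpa using Finset.single_le_sum (fun y _ => norm_nonneg y) hx

lemma mul_massF_le_GF {δ : ℝ} (hδ : 0 ≤ δ) (hθ : ∑ x ∈ θ.support, θ x = 0)
    (hsep : ∀ x ∈ θ.support, ∀ y ∈ θ.support, x ≠ y → δ ≤ dist x y) :
    δ * massF n θ ≤ 4 * GF n θ := by
  obtain ⟨φ, hφ, hsum⟩ := Finsupp.exists_lipschitzWith_one_sum_mul_eq hδ hsep
  have hle := sum_mul_le_GF hθ hφ
  rw [hsum] at hle
  rw [massF, Finsupp.sum_abs_eq_two_mul_sum_posPart hθ]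
  linarith

end DualLipschitzNorm

section Grid

variable {n k : ℕ} {x y : EuclideanSpace ℝ (Fin n)}

lemma norm_le_sqrt_of_mem_grid (hx : x ∈ grid n k) : ‖x‖ ≤ √n := by
  rw [EuclideanSpace.norm_eq]
  gcongr
  calc ∑ i, ‖x i‖ ^ 2 ≤ ∑ _i : Fin n, (1 : ℝ) :=
        Finset.sum_le_sum fun i _ => pow_le_one₀ (norm_nonneg _) (hx.1 i)
    _ = n := by simp

lemma inv_le_dist_of_mem_grid (hx : x ∈ grid n k) (hy : y ∈ grid n k) (hxy : x ≠ y) :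
    (k : ℝ)⁻¹ ≤ dist x y := by
  obtain ⟨i, hi⟩ : ∃ i, x i ≠ y i := by
    by_contra! h
    exact hxy (PiLp.ext h)
  obtain ⟨a, ha⟩ := hx.2 i
  obtain ⟨b, hb⟩ := hy.2 i
  have hab : (1 : ℝ) ≤ |(a : ℝ) - b| := by
    exact_mod_cast Int.one_le_abs (sub_ne_zero.mpr fun h => hi (by rw [ha, hb, h]))
  calc (k : ℝ)⁻¹ ≤ |(a : ℝ) - b| * (k : ℝ)⁻¹ := le_mul_of_one_le_left (by positivity) hab
    _ = dist (x i) (y i) := by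
        rw [Real.dist_eq, ha, hb, ← sub_div, abs_div, Nat.abs_cast, div_eq_mul_inv]
    _ ≤ dist x y := PiLp.dist_apply_le x y i

end Grid

/-- Comparison of mass and dual Lipschitz norm on grid points (Theorem 9.2):
there is `c(n) ≥ 1` such that for every `k ≥ 1` and every finitely supported
`θ` carried by the grid `Σ_k` with `Σ_x θ(x) = 0`,
`G(θ)/√n ≤ M(θ) ≤ c(n)·k^{2n}·G(θ)`. -/
theorem stmt6 (n : ℕ) (hn : 0 < n) :
    ∃ c : ℝ, 1 ≤ c ∧ ∀ k : ℕ, 0 < k →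
      ∀ θ : EuclideanSpace ℝ (Fin n) →₀ ℝ,
        ↑θ.support ⊆ grid n k → ∑ x ∈ θ.support, θ x = 0 →
        GF n θ / Real.sqrt n ≤ massF n θ ∧
        massF n θ ≤ c * (k : ℝ) ^ (2 * n) * GF n θ := by
  refine ⟨4, by norm_num, fun k hk θ hgrid hθ => ⟨?_, ?_⟩⟩
  · have hG := GF_le_mul_massF hθ fun x hx => norm_le_sqrt_of_mem_grid (hgrid hx)
    exact div_le_of_le_mul₀ (Real.sqrt_nonneg _) (Finset.sum_nonneg fun _ _ => abs_nonneg _)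
      (hG.trans_eq (mul_comm _ _))
  · have hk0 : (0 : ℝ) < k := by exact_mod_cast hk
    have hM : (k : ℝ)⁻¹ * massF n θ ≤ 4 * GF n θ :=
      mul_massF_le_GF (by positivity) hθ fun x hx y hy =>
        inv_le_dist_of_mem_grid (hgrid hx) (hgrid hy)
    have hG : 0 ≤ GF n θ := by simpa using sum_mul_le_GF hθ (LipschitzWith.const' (0 : ℝ))
    have hkpow : (k : ℝ) ≤ (k : ℝ) ^ (2 * n) :=
      le_self_pow₀ (by exact_mod_cast hk) (by omega)
    calc massF n θ ≤ 4 * k * GF n θ := by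
          rw [inv_mul_le_iff₀ hk0] at hM; linarith
      _ ≤ 4 * (k : ℝ) ^ (2 * n) * GF n θ := by gcongr
end
end

section
/- One-dimensional mass bound (step (ii) of the proof of Theorem 9.2): Let F ⊂ ℝ be a finite set, let ρ > 0 be such that |x − y| ≥ ρ for all distinct x, y ∈ F, and let θ : F → ℝ satisfy Σ_{x∈F} θ(x) = 0. Then Σ_{x∈F} |θ(x)| ≤ (card F / ρ) · sup{Σ_{x∈F} θ(x)·φ(x) : φ : ℝ → ℝ Lipschitz with constant at most 1}. -/
private lemma tent_lip (ρ x : ℝ) : LipschitzWith 1 (fun y => max 0 (ρ - |y - x|)) := by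
  apply LipschitzWith.of_dist_le_mul
  intro y z
  simp only [Real.dist_eq, NNReal.coe_one, one_mul]
  rw [max_comm (0:ℝ) (ρ - |y - x|), max_comm (0:ℝ) (ρ - |z - x|)]
  calc |max (ρ - |y - x|) 0 - max (ρ - |z - x|) 0|
      ≤ |(ρ - |y - x|) - (ρ - |z - x|)| := abs_max_sub_max_le_abs _ _ _
    _ = |(|z - x|) - (|y - x|)| := by ring_nf
    _ ≤ |(z - x) - (y - x)| := abs_abs_sub_abs_le_abs_sub _ _
    _ = |y - z| := by rw [abs_sub_comm]; ring_nf

/-- One-dimensional mass bound (step (ii) of the proof of Theorem 9.2):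
if `F ⊂ ℝ` is finite with pairwise distances at least `ρ > 0`, and
`θ : F → ℝ` has `Σ_{x∈F} θ(x) = 0`, then
`Σ_{x∈F} |θ(x)| ≤ (card F / ρ) · sup { Σ_{x∈F} θ(x) φ(x) : φ 1-Lipschitz }`. -/
theorem stmt7 (F : Finset ℝ) (ρ : ℝ) (hρ : 0 < ρ)
    (hsep : ∀ x ∈ F, ∀ y ∈ F, x ≠ y → ρ ≤ |x - y|)
    (θ : ℝ → ℝ) (hsum : ∑ x ∈ F, θ x = 0) :
    ∑ x ∈ F, |θ x| ≤ ((F.card : ℝ) / ρ) *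
      sSup {r : ℝ | ∃ φ : ℝ → ℝ, LipschitzWith 1 φ ∧ r = ∑ x ∈ F, θ x * φ x} := by
  set T : Set ℝ := {r : ℝ | ∃ φ : ℝ → ℝ, LipschitzWith 1 φ ∧ r = ∑ x ∈ F, θ x * φ x}
    with hT
  rcases F.eq_empty_or_nonempty with rfl | ⟨x0, hx0⟩
  · simp
  have hbdd : BddAbove T := by
    refine ⟨∑ x ∈ F, |θ x| * |x - x0|, ?_⟩
    rintro r ⟨φ, hφ, rfl⟩
    have hrw : ∑ x ∈ F, θ x * φ x = ∑ x ∈ F, θ x * (φ x - φ x0) := by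
      simp [mul_sub, Finset.sum_sub_distrib, ← Finset.sum_mul, hsum]
    rw [hrw]
    apply Finset.sum_le_sum
    intro x hx
    calc θ x * (φ x - φ x0) ≤ |θ x * (φ x - φ x0)| := le_abs_self _
      _ = |θ x| * |φ x - φ x0| := abs_mul _ _
      _ ≤ |θ x| * |x - x0| := by
          have h1 : |φ x - φ x0| ≤ |x - x0| := by
            simpa [Real.dist_eq] using hφ.dist_le_mul x x0
          exact mul_le_mul_of_nonneg_left h1 (abs_nonneg _)
  have key : ∀ x ∈ F, ρ * |θ x| ≤ sSup T := by
    intro x hx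
    set ε : ℝ := if 0 ≤ θ x then 1 else -1 with hε
    set φ : ℝ → ℝ := fun y => ε * max 0 (ρ - |y - x|) with hφdef
    have hlip : LipschitzWith 1 φ := by
      rcases le_or_gt 0 (θ x) with h | h
      · have : φ = fun y => max 0 (ρ - |y - x|) := by
          funext y; simp [hφdef, hε, h]
        rw [this]; exact tent_lip ρ x
      · have : φ = fun y => -(max 0 (ρ - |y - x|)) := by
          funext y; simp [hφdef, hε, not_le.2 h]
        rw [this]; exact (tent_lip ρ x).neg
    have hmem : ρ * |θ x| ∈ T := by
      refine ⟨φ, hlip, ?_⟩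
      rw [Finset.sum_eq_single x]
      · have hφx : φ x = ε * ρ := by
          simp [hφdef, max_eq_right hρ.le]
        rw [hφx]
        rcases le_or_gt 0 (θ x) with h | h
        · simp [hε, h, abs_of_nonneg h]; ring
        · simp [hε, not_le.2 h, abs_of_neg h]; ring
      · intro z hz hzx
        have : ρ ≤ |z - x| := hsep z hz x hx hzx
        have h0 : (0:ℝ) ⊔ (ρ - |z - x|) = 0 := max_eq_left (by linarith)
        simp [hφdef, h0]
      · intro h; exact absurd hx h
    exact le_csSup hbdd hmem
  have hS0 : 0 ≤ sSup T := by
    have hx := key x0 hx0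
    nlinarith [abs_nonneg (θ x0), hρ]
  have : ∑ x ∈ F, |θ x| ≤ ∑ x ∈ F, sSup T / ρ := by
    apply Finset.sum_le_sum
    intro x hx
    rw [le_div_iff₀ hρ]
    have := key x hx
    linarith [key x hx]
  calc ∑ x ∈ F, |θ x| ≤ ∑ x ∈ F, sSup T / ρ := this
    _ = (F.card : ℝ) * (sSup T / ρ) := by rw [Finset.sum_const, nsmul_eq_mul]
    _ = ((F.card : ℝ) / ρ) * sSup T := by ring
end

section
/- Separating direction for the grid (step (iii) of the proof of Theorem 9.2): Assume n ≥ 2 and let k be a positive integer. Then there exists a unit vector u ∈ ℝⁿ such that for all distinct x, y ∈ Σ_k one has |⟨x − y, u⟩| ≥ k^{−n} / (2·√2·5^{n−1}), where ⟨·,·⟩ is the Euclidean inner product. -/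
/-!
Take `u` in the direction of `v = (1, B, B², …, B^{n-1})` with `B = 5k`. For distinct grid points,
`k (x - y)` is a nonzero integer vector with entries of absolute value at most `2k < B`, so by
uniqueness of signed base-`B` expansions `k ⟪x - y, v⟫` is a nonzero integer. Hence
`|⟪x - y, v⟫| ≥ 1/k`, while `‖v‖² = ∑ B^{2i} ≤ 2 B^{2(n-1)}`.
-/

open scoped RealInnerProductSpace

noncomputable section

open Finset

theorem eq_zero_of_sum_mul_pow_eq_zero {B : ℤ} :
    ∀ {n : ℕ} {a : Fin n → ℤ}, (∀ i, |a i| < B) → ∑ i, a i * B ^ (i : ℕ) = 0 → a = 0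
  | 0, a, _, _ => Subsingleton.elim a 0
  | n + 1, a, ha, hsum => by
    have hsplit : a 0 + B * ∑ i : Fin n, a i.succ * B ^ (i : ℕ) = 0 := by
      rw [← hsum, Fin.sum_univ_succ, mul_sum]
      simp only [Fin.val_zero, pow_zero, mul_one, Fin.val_succ, pow_succ]
      ring_nf
    have hdvd : B ∣ a 0 := by
      rw [eq_neg_of_add_eq_zero_left hsplit]
      exact (dvd_mul_right _ _).neg_right
    have ha0 : a 0 = 0 := Int.eq_zero_of_abs_lt_dvd hdvd (ha 0)
    have hB : B ≠ 0 := ((abs_nonneg _).trans_lt (ha 0)).ne'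
    rw [ha0, zero_add, mul_eq_zero, or_iff_right hB] at hsplit
    have htail := eq_zero_of_sum_mul_pow_eq_zero (fun i => ha i.succ) hsplit
    funext i
    exact Fin.cases ha0 (fun j => congrFun htail j) i

theorem sum_range_pow_le_two_mul_pow {R : Type*} [CommRing R] [LinearOrder R]
    [IsStrictOrderedRing R] {r : R} (hr : 2 ≤ r) :
    ∀ n : ℕ, ∑ i ∈ range (n + 1), r ^ i ≤ 2 * r ^ n
  | 0 => by simp
  | n + 1 => by
    have ih := sum_range_pow_le_two_mul_pow hr n
    have hpow : 0 ≤ r ^ n := pow_nonneg (zero_le_two.trans hr) n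
    rw [sum_range_succ, pow_succ]
    nlinarith

def geomVec (n : ℕ) (r : ℝ) : EuclideanSpace ℝ (Fin n) :=
  WithLp.toLp 2 fun i => r ^ (i : ℕ)

theorem inner_geomVec {n : ℕ} (x : EuclideanSpace ℝ (Fin n)) (r : ℝ) :
    ⟪x, geomVec n r⟫ = ∑ i, x i * r ^ (i : ℕ) := by
  simp [geomVec, PiLp.inner_apply, mul_comm]

theorem geomVec_ne_zero {n : ℕ} (hn : 0 < n) (r : ℝ) : geomVec n r ≠ 0 := fun h => by
  simpa [geomVec] using congrArg (fun v : EuclideanSpace ℝ (Fin n) => v ⟨0, hn⟩) h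

theorem norm_geomVec_le {r : ℝ} (hr : 2 ≤ r) (n : ℕ) :
    ‖geomVec (n + 1) r‖ ≤ √2 * r ^ n := by
  have hsq : ‖geomVec (n + 1) r‖ ^ 2 ≤ (√2 * r ^ n) ^ 2 := by
    calc ‖geomVec (n + 1) r‖ ^ 2 = ∑ i ∈ range (n + 1), (r ^ 2) ^ i := by
          rw [EuclideanSpace.real_norm_sq_eq, ← Fin.sum_univ_eq_sum_range]
          simp only [geomVec, ← pow_mul, mul_comm]
      _ ≤ 2 * (r ^ 2) ^ n := sum_range_pow_le_two_mul_pow (by nlinarith) n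
      _ = (√2 * r ^ n) ^ 2 := by rw [mul_pow, Real.sq_sqrt zero_le_two]; ring
  simpa using abs_le_of_sq_le_sq hsq (by have := zero_le_two.trans hr; positivity)

theorem exists_int_of_mem_grid {n k : ℕ} (hk : 0 < k) {x : EuclideanSpace ℝ (Fin n)}
    (hx : x ∈ grid n k) : ∃ m : Fin n → ℤ, (∀ i, |m i| ≤ k) ∧ ∀ i, x i = m i / k := by
  obtain ⟨hbound, hint⟩ := hx
  choose m hm using hint
  beta_reduce at hbound hm
  refine ⟨m, fun i => ?_, hm⟩
  have hi := hbound i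
  rw [hm i, abs_div, Nat.abs_cast, div_le_one (Nat.cast_pos.mpr hk), ← Int.cast_abs] at hi
  exact_mod_cast hi

theorem inv_le_abs_inner_geomVec_of_mem_grid {n k : ℕ} (hk : 0 < k) {B : ℤ} (hB : 2 * k < B)
    {x y : EuclideanSpace ℝ (Fin n)} (hx : x ∈ grid n k) (hy : y ∈ grid n k) (hxy : x ≠ y) :
    (k : ℝ)⁻¹ ≤ |⟪x - y, geomVec n B⟫| := by
  obtain ⟨mx, hmx_le, hmx⟩ := exists_int_of_mem_grid hk hx
  obtain ⟨my, hmy_le, hmy⟩ := exists_int_of_mem_grid hk hy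
  have hdigits : ∀ i, |(mx - my) i| < B := fun i =>
    (abs_sub _ _).trans_lt (by linarith [hmx_le i, hmy_le i])
  have hne : mx - my ≠ 0 := fun h => hxy <| by
    ext i
    rw [hmx, hmy, sub_eq_zero.mp (congrFun h i)]
  have hinner : ⟪x - y, geomVec n B⟫ = ((∑ i, (mx - my) i * B ^ (i : ℕ) : ℤ) : ℝ) / k := by
    rw [inner_geomVec, Int.cast_sum, sum_div]
    refine sum_congr rfl fun i _ => ?_
    rw [PiLp.sub_apply, hmx, hmy, Pi.sub_apply]
    push_cast
    ring
  rw [hinner, abs_div, Nat.abs_cast, ← Int.cast_abs, inv_eq_one_div]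
  gcongr
  exact_mod_cast Int.one_le_abs (mt (eq_zero_of_sum_mul_pow_eq_zero hdigits) hne)

/-- Separating direction for the grid (step (iii) of the proof of Theorem 9.2):
for `n ≥ 2` there is a unit vector `u ∈ ℝⁿ` with
`|⟨x - y, u⟩| ≥ k⁻ⁿ / (2·√2·5^{n-1})` for all distinct `x, y ∈ Σ_k`. -/
theorem stmt8 (n : ℕ) (hn : 2 ≤ n) (k : ℕ) (hk : 0 < k) :
    ∃ u : EuclideanSpace ℝ (Fin n), ‖u‖ = 1 ∧
      ∀ x ∈ grid n k, ∀ y ∈ grid n k, x ≠ y →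
        ((k : ℝ) ^ n)⁻¹ / (2 * Real.sqrt 2 * 5 ^ (n - 1)) ≤ |⟪x - y, u⟫| := by
  obtain ⟨m, rfl⟩ : ∃ m, n = m + 1 := ⟨n - 1, by omega⟩
  set v := geomVec (m + 1) (5 * k)
  have hv : v ≠ 0 := geomVec_ne_zero m.succ_pos _
  refine ⟨‖v‖⁻¹ • v, norm_smul_inv_norm hv, fun x hx y hy hxy => ?_⟩
  have hk1 : (1 : ℝ) ≤ k := Nat.one_le_cast.mpr hk
  have hnorm : ‖v‖ ≤ √2 * (5 * k) ^ m := norm_geomVec_le (by linarith) m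
  calc ((k : ℝ) ^ (m + 1))⁻¹ / (2 * √2 * 5 ^ (m + 1 - 1))
      ≤ (√2 * (5 * k) ^ m)⁻¹ * (k : ℝ)⁻¹ := by
        rw [Nat.add_sub_cancel, div_eq_mul_inv, ← mul_inv, ← mul_inv, mul_pow, pow_succ]
        refine inv_anti₀ (by positivity) ?_
        nlinarith [show 0 ≤ √2 * 5 ^ m * k ^ m * k by positivity]
    _ ≤ ‖v‖⁻¹ * |⟪x - y, v⟫| := by
        gcongr
        simpa using inv_le_abs_inner_geomVec_of_mem_grid (B := 5 * k) hk (by omega) hx hy hxy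
    _ = |⟪x - y, ‖v‖⁻¹ • v⟫| := by rw [real_inner_smul_right, abs_mul, abs_inv, abs_norm]
end
end

section
/- Explicit formula for the dual Lipschitz norm of a balanced atomic measure on the line (established in step (ii) of the proof of Theorem 9.2 via the constancy theorem): Let x₁ < x₂ < … < x_N be real numbers (N ≥ 2) and let θ₁, …, θ_N ∈ ℝ with Σ_{i=1}^N θᵢ = 0. Then sup{Σ_{i=1}^N θᵢ·φ(xᵢ) : φ : ℝ → ℝ Lipschitz with constant at most 1} = Σ_{i=1}^{N−1} |Σ_{j=1}^{i} θⱼ| · (x_{i+1} − xᵢ). -/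
open Finset

private lemma abel_aux (N : ℕ) (θ v : ℕ → ℝ)
    (hsum : ∑ i ∈ range N, θ i = 0) :
    ∑ i ∈ range N, θ i * v i =
      ∑ i ∈ range (N - 1), (∑ j ∈ range (i + 1), θ j) * (v i - v (i + 1)) := by
  have h := Finset.sum_range_by_parts v θ N
  simp only [smul_eq_mul, hsum, mul_zero, zero_sub] at h
  calc ∑ i ∈ range N, θ i * v i = ∑ i ∈ range N, v i * θ i := by
        simp [mul_comm]
    _ = -∑ i ∈ range (N - 1), (v (i + 1) - v i) * ∑ j ∈ range (i + 1), θ j := h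
    _ = _ := by rw [← Finset.sum_neg_distrib]; exact Finset.sum_congr rfl fun i _ => by ring

private lemma abs_sign_le_one (a : ℝ) : |Real.sign a| ≤ 1 := by
  rcases lt_trichotomy a 0 with h | h | h
  · simp [Real.sign_of_neg h]
  · simp [h]
  · simp [Real.sign_of_pos h]

private lemma self_mul_real_sign (a : ℝ) : a * Real.sign a = |a| := by
  rcases lt_trichotomy a 0 with h | h | h
  · rw [Real.sign_of_neg h, abs_of_neg h]; ring
  · simp [h]
  · rw [Real.sign_of_pos h, abs_of_pos h]; ring

/-- Explicit formula for the dual Lipschitz norm of a balanced atomic measure on the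
line (step (ii) of the proof of Theorem 9.2): if `x₁ < x₂ < … < x_N` (`N ≥ 2`) and
`θ₁, …, θ_N` sum to `0`, then
`sup { Σᵢ θᵢ φ(xᵢ) : φ : ℝ → ℝ 1-Lipschitz } = Σ_{i=1}^{N-1} |Σ_{j=1}^{i} θⱼ| (x_{i+1} - xᵢ)`
(here `x` and `θ` are indexed from `0`). -/
theorem stmt10 (N : ℕ) (hN : 2 ≤ N) (x θ : ℕ → ℝ)
    (hmono : ∀ i, i + 1 < N → x i < x (i + 1))
    (hsum : ∑ i ∈ Finset.range N, θ i = 0) :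
    sSup {r : ℝ | ∃ φ : ℝ → ℝ, LipschitzWith 1 φ ∧
        r = ∑ i ∈ Finset.range N, θ i * φ (x i)} =
      ∑ i ∈ Finset.range (N - 1),
        |∑ j ∈ Finset.range (i + 1), θ j| * (x (i + 1) - x i) := by
  set S : ℕ → ℝ := fun i => ∑ j ∈ range (i + 1), θ j with hS
  set s : ℕ → ℝ := fun i => Real.sign (S i) with hs
  set w : ℕ → ℝ := fun i => ∑ k ∈ range i, (-(s k) * (x (k + 1) - x k)) with hw
  set B : ℝ := ∑ i ∈ range (N - 1), |S i| * (x (i + 1) - x i) with hB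
  -- gaps are nonneg for relevant indices
  have hgap : ∀ k, k + 1 < N → 0 ≤ x (k + 1) - x k := fun k hk =>
    sub_nonneg.2 (hmono k hk).le
  -- strict monotonicity of x on indices < N
  have hxmono : ∀ i j, i ≤ j → j < N → x i ≤ x j := by
    intro i j hij hjN
    induction j with
    | zero => simp_all
    | succ n ih =>
      rcases Nat.eq_or_lt_of_le hij with h | h
      · rw [h]
      · exact le_trans (ih (Nat.lt_succ_iff.1 h) (Nat.lt_of_succ_lt hjN))
          (hmono n hjN).le
  -- key Lipschitz bound for w
  have hwlip : ∀ i j, i ≤ j → j < N → |w j - w i| ≤ x j - x i := by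
    intro i j hij hjN
    have h1 : w j - w i = ∑ k ∈ Ico i j, (-(s k) * (x (k + 1) - x k)) := by
      rw [hw]
      rw [Finset.sum_Ico_eq_sub _ hij]
    have h2 : x j - x i = ∑ k ∈ Ico i j, (x (k + 1) - x k) := by
      have := Finset.sum_Ico_eq_sub (fun k => x k - x 0) hij
      have h3 : ∀ n : ℕ, ∑ k ∈ range n, (x (k + 1) - x k) = x n - x 0 :=
        fun n => Finset.sum_range_sub x n
      rw [show (Ico i j) = Ico i j from rfl]
      rw [Finset.sum_Ico_eq_sub _ hij, h3, h3]
      ring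
    rw [h1, h2]
    calc |∑ k ∈ Ico i j, (-(s k) * (x (k + 1) - x k))|
        ≤ ∑ k ∈ Ico i j, |(-(s k) * (x (k + 1) - x k))| :=
          Finset.abs_sum_le_sum_abs _ _
      _ ≤ ∑ k ∈ Ico i j, (x (k + 1) - x k) := by
          apply Finset.sum_le_sum
          intro k hk
          have hk2 : k + 1 < N := by
            have := (Finset.mem_Ico.1 hk).2
            omega
          rw [abs_mul, abs_neg]
          calc |s k| * |x (k + 1) - x k| ≤ 1 * |x (k + 1) - x k| := by
                apply mul_le_mul_of_nonneg_right (abs_sign_le_one _) (abs_nonneg _)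
            _ = x (k + 1) - x k := by rw [one_mul, abs_of_nonneg (hgap k hk2)]
  -- the function on the finite set and its extension
  set f : ℝ → ℝ := fun t => ∑ i ∈ range N, if x i = t then w i else 0 with hf
  have hxinj : ∀ i j, i < N → j < N → x i = x j → i = j := by
    intro i j hi hj hxy
    by_contra h
    rcases Nat.lt_or_ge i j with h' | h'
    · have := hxmono (i + 1) j h' hj
      have := hmono i (lt_of_le_of_lt (Nat.succ_le_of_lt h') hj)
      linarith
    · have h'' : j < i := by omega
      have := hxmono (j + 1) i h'' hi
      have := hmono j (lt_of_le_of_lt (Nat.succ_le_of_lt h'') hi)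
      linarith
  have hfval : ∀ j, j < N → f (x j) = w j := by
    intro j hj
    rw [hf]
    simp only []
    rw [Finset.sum_eq_single_of_mem j (Finset.mem_range.2 hj)]
    · simp
    · intro i hi hij
      have : x i ≠ x j := fun h => hij (hxinj i j (Finset.mem_range.1 hi) hj h)
      simp [this]
  have hflip : LipschitzOnWith 1 f (x '' {i | i < N}) := by
    rw [lipschitzOnWith_iff_dist_le_mul]
    rintro a ⟨i, hi, rfl⟩ b ⟨j, hj, rfl⟩
    rw [hfval i hi, hfval j hj, NNReal.coe_one, one_mul, Real.dist_eq, Real.dist_eq]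
    rcases le_total i j with h | h
    · rw [abs_sub_comm, abs_sub_comm (x i) (x j)]
      calc |w j - w i| ≤ x j - x i := hwlip i j h hj
        _ ≤ |x j - x i| := le_abs_self _
    · calc |w i - w j| ≤ x i - x j := hwlip j i h hi
        _ ≤ |x i - x j| := le_abs_self _
  obtain ⟨g, hg, hgf⟩ := hflip.extend_real
  have hgval : ∀ j, j < N → g (x j) = w j := by
    intro j hj
    rw [← hgf ⟨j, hj, rfl⟩, hfval j hj]
  -- value of the constructed function
  have hSlast : S (N - 1) = 0 := by
    rw [hS]
    simp only []
    rw [show N - 1 + 1 = N by omega]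
    exact hsum
  have hgsum : ∑ i ∈ range N, θ i * g (x i) = B := by
    have h1 : ∑ i ∈ range N, θ i * g (x i) =
        ∑ i ∈ range (N - 1), S i * (g (x i) - g (x (i + 1))) :=
      abel_aux N θ (fun i => g (x i)) hsum
    rw [h1, hB]
    apply Finset.sum_congr rfl
    intro i hi
    have hi1 : i + 1 < N := by have := Finset.mem_range.1 hi; omega
    rw [hgval i (by omega), hgval (i + 1) hi1]
    have : w i - w (i + 1) = s i * (x (i + 1) - x i) := by
      rw [hw]
      simp only []
      rw [Finset.sum_range_succ]
      ring
    rw [this, hs]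
    simp only []
    rw [show S i * (Real.sign (S i) * (x (i + 1) - x i))
        = (S i * Real.sign (S i)) * (x (i + 1) - x i) by ring, self_mul_real_sign]
  -- upper bound
  have hub : ∀ r ∈ {r : ℝ | ∃ φ : ℝ → ℝ, LipschitzWith 1 φ ∧
      r = ∑ i ∈ Finset.range N, θ i * φ (x i)}, r ≤ B := by
    rintro r ⟨φ, hφ, rfl⟩
    rw [abel_aux N θ (fun i => φ (x i)) hsum, hB]
    apply Finset.sum_le_sum
    intro i hi
    have hi1 : i + 1 < N := by have := Finset.mem_range.1 hi; omega
    have hd : |φ (x i) - φ (x (i + 1))| ≤ x (i + 1) - x i := by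
      have := hφ.dist_le_mul (x i) (x (i + 1))
      rw [Real.dist_eq, Real.dist_eq, NNReal.coe_one, one_mul] at this
      rw [abs_sub_comm (x i) (x (i + 1)), abs_of_nonneg (hgap i hi1)] at this
      exact this
    calc S i * (φ (x i) - φ (x (i + 1))) ≤ |S i * (φ (x i) - φ (x (i + 1)))| :=
          le_abs_self _
      _ = |S i| * |φ (x i) - φ (x (i + 1))| := abs_mul _ _
      _ ≤ |S i| * (x (i + 1) - x i) :=
          mul_le_mul_of_nonneg_left hd (abs_nonneg _)
  have hmem : B ∈ {r : ℝ | ∃ φ : ℝ → ℝ, LipschitzWith 1 φ ∧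
      r = ∑ i ∈ Finset.range N, θ i * φ (x i)} := ⟨g, hg, hgsum.symm⟩
  exact le_antisymm (csSup_le ⟨B, hmem⟩ hub) (le_csSup ⟨B, hub⟩ hmem)
end

section
/- Logarithmic counting bound (10.2(G)): For all integers 1 ≤ q ≤ p, ln(c(p,q)) ≤ q · ln(11·p/q), the inequality being between real numbers (note that c(p,q) ≥ 1 since the zero function belongs to E(p,q)). -/
/-- `E(p,q)`: integer-valued functions on `{1,…,q}` with zero sum and `ℓ¹`-norm at
most `p`. -/
def Eset (p q : ℕ) : Set (Fin q → ℤ) :=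
  {f | ∑ j, f j = 0 ∧ ∑ j, |f j| ≤ (p : ℤ)}

/-! Dropping the zero-sum condition, a function of `ℓ¹`-norm at most `p` is determined by its
absolute values, a point of the simplex `∑ gᵢ ≤ p` counted by stars and bars, together with its
signs; this gives `c(p,q) ≤ C(q+p, q) 2^q`. The bound `C(n,k) ≤ (e n / k)^k` coming from
`k^k / k! ≤ e^k`, and `4e ≤ 11`, finish the estimate. -/

theorem Nat.choose_le_exp_one_mul_div_pow (n k : ℕ) :
    (n.choose k : ℝ) ≤ (Real.exp 1 * n / k) ^ k := by
  rcases k.eq_zero_or_pos with rfl | hk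
  · simp
  have hk' : (0 : ℝ) < k := by exact_mod_cast hk
  have hfact : (k : ℝ) ^ k / k.factorial ≤ Real.exp 1 ^ k := by
    simpa [← Real.exp_nat_mul] using Real.pow_div_factorial_le_exp _ hk'.le k
  calc (n.choose k : ℝ) ≤ n ^ k / k.factorial := Nat.choose_le_pow_div k n
    _ = (n / k) ^ k * (k ^ k / k.factorial) := by rw [div_pow]; field_simp
    _ ≤ (n / k) ^ k * Real.exp 1 ^ k := by gcongr
    _ = (Real.exp 1 * n / k) ^ k := by ring

/-- The simplex point `g` as a multiset of size `p`: `gᵢ` copies of `i.succ`, padded with copies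
of `0`. -/
noncomputable def slackSym (p q : ℕ) (g : {g : Fin q → ℕ // ∑ i, g i ≤ p}) :
    Sym (Fin (q + 1)) p :=
  (Sym.equivNatSumOfFintype (Fin (q + 1)) p).symm
    ⟨Fin.cons (p - ∑ i, g.1 i) g.1, by rw [Fin.sum_cons]; have := g.2; omega⟩

theorem slackSym_injective (p q : ℕ) : Function.Injective (slackSym p q) := by
  intro g h hgh
  have hcons := congrArg Subtype.val ((Sym.equivNatSumOfFintype _ _).symm.injective hgh)
  ext i
  simpa using congrFun hcons i.succ

instance (p q : ℕ) : Finite {g : Fin q → ℕ // ∑ i, g i ≤ p} :=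
  Finite.of_injective _ (slackSym_injective p q)

theorem card_sum_le_le_choose (p q : ℕ) :
    Nat.card {g : Fin q → ℕ // ∑ i, g i ≤ p} ≤ (q + p).choose q :=
  calc Nat.card {g : Fin q → ℕ // ∑ i, g i ≤ p}
      ≤ Nat.card (Sym (Fin (q + 1)) p) := Nat.card_le_card_of_injective _ (slackSym_injective p q)
    _ = (q + p).choose q := by
      rw [Nat.card_eq_fintype_card, Sym.card_sym_eq_choose, Fintype.card_fin,
        show q + 1 + p - 1 = q + p by omega, Nat.choose_symm_add]

noncomputable def absSign (p q : ℕ) (f : {f : Fin q → ℤ // ∑ i, |f i| ≤ p}) :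
    {g : Fin q → ℕ // ∑ i, g i ≤ p} × (Fin q → Bool) :=
  (⟨fun i => (f.1 i).natAbs, by
      have := f.2
      simp only [Int.abs_eq_natAbs] at this
      exact_mod_cast this⟩,
    fun i => decide (f.1 i < 0))

theorem absSign_injective (p q : ℕ) : Function.Injective (absSign p q) := by
  intro f h hfh
  simp only [absSign, Prod.mk.injEq, Subtype.mk.injEq, funext_iff] at hfh
  obtain ⟨habs, hsign⟩ := hfh
  ext i
  have habs_i := habs i
  have hsign_i := hsign i
  simp only [decide_eq_decide] at hsign_i
  omega

theorem finite_setOf_sum_abs_le (p q : ℕ) : {f : Fin q → ℤ | ∑ i, |f i| ≤ p}.Finite :=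
  Set.finite_coe_iff.mp (Finite.of_injective _ (absSign_injective p q))

theorem card_sum_abs_le_le_choose_mul_two_pow (p q : ℕ) :
    Nat.card {f : Fin q → ℤ // ∑ i, |f i| ≤ p} ≤ (q + p).choose q * 2 ^ q :=
  calc Nat.card {f : Fin q → ℤ // ∑ i, |f i| ≤ p}
      ≤ Nat.card ({g : Fin q → ℕ // ∑ i, g i ≤ p} × (Fin q → Bool)) :=
        Nat.card_le_card_of_injective _ (absSign_injective p q)
    _ ≤ (q + p).choose q * 2 ^ q := by
      rw [Nat.card_prod, Nat.card_fun, Nat.card_eq_fintype_card (α := Bool), Fintype.card_bool,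
        Nat.card_eq_fintype_card (α := Fin q), Fintype.card_fin]
      exact Nat.mul_le_mul_right _ (card_sum_le_le_choose p q)

theorem Eset_subset_sum_abs_le (p q : ℕ) : Eset p q ⊆ {f | ∑ i, |f i| ≤ p} :=
  fun _ hf => hf.2

theorem finite_Eset (p q : ℕ) : (Eset p q).Finite :=
  (finite_setOf_sum_abs_le p q).subset (Eset_subset_sum_abs_le p q)

theorem card_Eset_le (p q : ℕ) (hqp : q ≤ p) : (Nat.card (Eset p q) : ℝ) ≤ (11 * p / q) ^ q := by
  have hcount : Nat.card (Eset p q) ≤ (q + p).choose q * 2 ^ q :=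
    (Nat.card_mono (finite_setOf_sum_abs_le p q) (Eset_subset_sum_abs_le p q)).trans
      (card_sum_abs_le_le_choose_mul_two_pow p q)
  have hqp' : (q : ℝ) ≤ p := by exact_mod_cast hqp
  have h4e : 4 * Real.exp 1 ≤ 11 := by linarith [Real.exp_one_lt_d9]
  calc (Nat.card (Eset p q) : ℝ) ≤ (q + p).choose q * 2 ^ q := by exact_mod_cast hcount
    _ ≤ (Real.exp 1 * ↑(q + p) / q) ^ q * 2 ^ q := by
      gcongr; exact Nat.choose_le_exp_one_mul_div_pow _ _
    _ = (2 * Real.exp 1 * (q + p) / q) ^ q := by rw [← mul_pow]; push_cast; ring_nf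
    _ ≤ (11 * p / q) ^ q := by
      gcongr (?_ / _) ^ _
      nlinarith [Real.exp_pos 1]

theorem stmt17_general (p q : ℕ) (hqp : q ≤ p) :
    Real.log (Nat.card ↥(Eset p q)) ≤ q * Real.log (11 * p / q) := by
  have : Finite (Eset p q) := (finite_Eset p q).to_subtype
  have : Nonempty (Eset p q) := ⟨⟨0, by simp [Eset]⟩⟩
  rw [← Real.log_pow]
  exact Real.log_le_log (by exact_mod_cast Nat.card_pos) (card_Eset_le p q hqp)

/-- Logarithmic counting bound (10.2(G)): for `1 ≤ q ≤ p`,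
`ln c(p,q) ≤ q · ln(11p/q)`. -/
theorem stmt17 (p q : ℕ) (hq : 1 ≤ q) (hqp : q ≤ p) :
    Real.log (Nat.card ↥(Eset p q)) ≤ q * Real.log (11 * p / q) :=
  stmt17_general p q hqp
end
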